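/- Let P be a nonempty compact convex subset of ℝⁿ, f, g : ℝⁿ → ℝ convex and differentiable, F = f + g, with curvature-type constant C_F ≥ 0 as above. Let x⋆ ∈ P minimize F over P. Let (x_k) be generated by the generalized conditional gradient algorithm with exact line search: x_0 ∈ P, s_k minimizes u ↦ ⟨∇f(x_k), u⟩ + g(u) over P, α_k ∈ [0,1] minimizes α ↦ F(x_k + α(s_k − x_k)) over [0,1], and x_{k+1} = x_k + α_k(s_k − x_k). Then for each k ≥ 1, F(x_k) − F(x⋆) ≤ 2C_F/(k+2). -/

import Mathlib

open RealInnerProductSpace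

/-!
With `h_k = F x_k - F x⋆`, convexity of `f` and `g` together with the choice of `s_k`
bound the generalized Frank–Wolfe gap `⟪∇F x_k, s_k - x_k⟫` by `-h_k`. Since the exact
line search does at least as well as any fixed step `a ∈ [0, 1]`, the curvature bound gives
`h_{k+1} ≤ (1 - a) h_k + C_F a² / 2`; the choice `a = 1` at `k = 0` and `a = 2/(k+2)`
afterwards turns this into `h_k ≤ 2 C_F / (k + 2)` by induction.
-/

open Set

theorem le_two_mul_div_of_forall_le_one_sub_mul {h : ℕ → ℝ} {C : ℝ} (hC : 0 ≤ C)
    (hrec : ∀ k, ∀ a ∈ Icc (0 : ℝ) 1, h (k + 1) ≤ (1 - a) * h k + C / 2 * a ^ 2) :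
    ∀ k, 1 ≤ k → h k ≤ 2 * C / ((k : ℝ) + 2) := by
  intro k hk
  induction k, hk using Nat.le_induction with
  | base =>
    have := hrec 0 1 (by norm_num)
    norm_num at this ⊢
    linarith
  | succ k _ ih =>
    set K : ℝ := (k : ℝ) + 2 with hK
    have hK2 : 2 ≤ K := by simp [hK]
    have ha : 2 / K ∈ Icc (0 : ℝ) 1 :=
      ⟨by positivity, by rw [div_le_one (by linarith)]; linarith⟩
    have h1a : 0 ≤ 1 - 2 / K := by linarith [ha.2]
    calc h (k + 1) ≤ (1 - 2 / K) * h k + C / 2 * (2 / K) ^ 2 := hrec k _ ha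
      _ ≤ (1 - 2 / K) * (2 * C / K) + C / 2 * (2 / K) ^ 2 := by gcongr
      _ = 2 * C * (K - 1) / K ^ 2 := by field_simp; ring
      _ ≤ 2 * C / (K + 1) := by
        rw [div_le_div_iff₀ (by positivity) (by linarith)]
        nlinarith
      _ = 2 * C / (((k + 1 : ℕ) : ℝ) + 2) := by push_cast [hK]; ring

theorem Convex.iterate_add_smul_sub_mem {E : Type*} [AddCommGroup E] [Module ℝ E] {P : Set E}
    (hP : Convex ℝ P) {x s : ℕ → E} {α : ℕ → ℝ} (hx0 : x 0 ∈ P)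
    (hs : ∀ k, s k ∈ P) (hα : ∀ k, α k ∈ Icc (0 : ℝ) 1)
    (hstep : ∀ k, x (k + 1) = x k + α k • (s k - x k)) (k : ℕ) : x k ∈ P := by
  induction k with
  | zero => exact hx0
  | succ k ih => exact hstep k ▸ hP.add_smul_sub_mem ih (hs k) (hα k)

section Gradient

variable {E : Type*} [NormedAddCommGroup E] [InnerProductSpace ℝ E] [CompleteSpace E]

theorem gradient_fun_add {f g : E → ℝ} {x : E} (hf : DifferentiableAt ℝ f x)
    (hg : DifferentiableAt ℝ g x) :
    gradient (fun z => f z + g z) x = gradient f x + gradient g x := by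
  refine HasGradientAt.gradient ?_
  rw [hasGradientAt_iff_hasFDerivAt, map_add]
  exact hf.hasGradientAt.hasFDerivAt.add hg.hasGradientAt.hasFDerivAt

theorem ConvexOn.inner_gradient_sub_le {s : Set E} {f : E → ℝ} {x y : E} (hf : ConvexOn ℝ s f)
    (hx : x ∈ s) (hy : y ∈ s) (hfx : DifferentiableAt ℝ f x) :
    ⟪gradient f x, y - x⟫ ≤ f y - f x := by
  let L : ℝ →ᵃ[ℝ] E := AffineMap.lineMap x y
  have hline : ConvexOn ℝ (L ⁻¹' s) (f ∘ L) := hf.comp_affineMap L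
  have hderiv : HasDerivAt (f ∘ L) (fderiv ℝ f x (y - x)) 0 := by
    have hfx' : DifferentiableAt ℝ f (L 0) := by simpa [L] using hfx
    simpa [L] using hfx'.hasFDerivAt.comp_hasDerivAt 0 AffineMap.hasDerivAt_lineMap
  have := hline.le_slope_of_hasDerivAt (by simpa [L] using hx) (by simpa [L] using hy)
    zero_lt_one hderiv
  simpa [L, inner_gradient_left, slope_def_field] using this

theorem inner_gradient_add_sub_le_of_isMinOn {P : Set E} {f g : E → ℝ} {x s xstar : E}
    (hf : ConvexOn ℝ P f) (hg : ConvexOn ℝ P g)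
    (hfx : DifferentiableAt ℝ f x) (hgx : DifferentiableAt ℝ g x)
    (hx : x ∈ P) (hs : s ∈ P) (hxstar : xstar ∈ P)
    (hsmin : IsMinOn (fun u => ⟪gradient f x, u⟫ + g u) P s) :
    ⟪gradient (fun z => f z + g z) x, s - x⟫ ≤ (f xstar + g xstar) - (f x + g x) := by
  have hg_lin : ⟪gradient g x, s - x⟫ ≤ g s - g x := hg.inner_gradient_sub_le hx hs hgx
  have hf_lin : ⟪gradient f x, xstar - x⟫ ≤ f xstar - f x :=
    hf.inner_gradient_sub_le hx hxstar hfx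
  have hs_le : ⟪gradient f x, s⟫ + g s ≤ ⟪gradient f x, xstar⟫ + g xstar := hsmin hxstar
  rw [gradient_fun_add hfx hgx, inner_add_left]
  rw [inner_sub_right] at hf_lin ⊢
  linarith

theorem sub_le_of_isMinOn_lineSearch {F : E → ℝ} {x s xstar : E} {α C : ℝ}
    (hcurv : ∀ a ∈ Icc (0 : ℝ) 1,
      F ((1 - a) • x + a • s) ≤ F x + a * ⟪gradient F x, s - x⟫ + C / 2 * a ^ 2)
    (hgap : ⟪gradient F x, s - x⟫ ≤ F xstar - F x)
    (hα : IsMinOn (fun a : ℝ => F (x + a • (s - x))) (Icc 0 1) α) {a : ℝ}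
    (ha : a ∈ Icc 0 1) :
    F (x + α • (s - x)) - F xstar ≤ (1 - a) * (F x - F xstar) + C / 2 * a ^ 2 := by
  have hline : F (x + α • (s - x)) ≤ F ((1 - a) • x + a • s) := by
    have hmin : F (x + α • (s - x)) ≤ F (x + a • (s - x)) := hα ha
    rwa [show x + a • (s - x) = (1 - a) • x + a • s by module] at hmin
  have := mul_le_mul_of_nonneg_left hgap ha.1
  linarith [hcurv a ha]

end Gradient

theorem stmt_13_general (n : ℕ) (P : Set (EuclideanSpace ℝ (Fin n)))
    (hPconv : Convex ℝ P)
    (f g : EuclideanSpace ℝ (Fin n) → ℝ)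
    (hfconv : ConvexOn ℝ Set.univ f) (hgconv : ConvexOn ℝ Set.univ g)
    (hfdiff : Differentiable ℝ f) (hgdiff : Differentiable ℝ g)
    (CF : ℝ) (hCF : 0 ≤ CF)
    (hcurv : ∀ x ∈ P, ∀ y ∈ P, ∀ α ∈ Set.Icc (0 : ℝ) 1,
      f ((1 - α) • x + α • y) + g ((1 - α) • x + α • y) ≤
        f x + g x + α * ⟪gradient (fun z => f z + g z) x, y - x⟫ + CF / 2 * α ^ 2)
    (xstar : EuclideanSpace ℝ (Fin n)) (hxstar : xstar ∈ P)
    (x s : ℕ → EuclideanSpace ℝ (Fin n)) (α : ℕ → ℝ) (hx0 : x 0 ∈ P)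
    (hsP : ∀ k, s k ∈ P)
    (hsmin : ∀ k, IsMinOn (fun u => ⟪gradient f (x k), u⟫ + g u) P (s k))
    (hαmem : ∀ k, α k ∈ Set.Icc (0 : ℝ) 1)
    (hαmin : ∀ k, IsMinOn (fun a : ℝ => f (x k + a • (s k - x k)) + g (x k + a • (s k - x k)))
      (Set.Icc (0 : ℝ) 1) (α k))
    (hstep : ∀ k : ℕ, x (k + 1) = x k + α k • (s k - x k)) :
    ∀ k : ℕ, 1 ≤ k →
      (f (x k) + g (x k)) - (f xstar + g xstar) ≤ 2 * CF / ((k : ℝ) + 2) := by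
  have hxP := hPconv.iterate_add_smul_sub_mem hx0 hsP hαmem hstep
  refine le_two_mul_div_of_forall_le_one_sub_mul
    (h := fun k => (f (x k) + g (x k)) - (f xstar + g xstar)) hCF ?_
  intro k a ha
  have hgap := inner_gradient_add_sub_le_of_isMinOn (hfconv.subset (subset_univ P) hPconv)
    (hgconv.subset (subset_univ P) hPconv) (hfdiff _) (hgdiff _) (hxP k) (hsP k) hxstar (hsmin k)
  have := sub_le_of_isMinOn_lineSearch (F := fun z => f z + g z)
    (hcurv (x k) (hxP k) (s k) (hsP k)) hgap (hαmin k) ha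
  simpa only [hstep k] using this

/-- rate with exact line search: the generalized conditional gradient iterates
with exact line search satisfy `F x_k - F x⋆ ≤ 2 C_F/(k+2)` for all `k ≥ 1`. -/
theorem stmt_13 (n : ℕ) (P : Set (EuclideanSpace ℝ (Fin n)))
    (hPne : P.Nonempty) (hPcpt : IsCompact P) (hPconv : Convex ℝ P)
    (f g : EuclideanSpace ℝ (Fin n) → ℝ)
    (hfconv : ConvexOn ℝ Set.univ f) (hgconv : ConvexOn ℝ Set.univ g)
    (hfdiff : Differentiable ℝ f) (hgdiff : Differentiable ℝ g)
    (CF : ℝ) (hCF : 0 ≤ CF)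
    (hcurv : ∀ x ∈ P, ∀ y ∈ P, ∀ α ∈ Set.Icc (0 : ℝ) 1,
      f ((1 - α) • x + α • y) + g ((1 - α) • x + α • y) ≤
        f x + g x + α * ⟪gradient (fun z => f z + g z) x, y - x⟫ + CF / 2 * α ^ 2)
    (xstar : EuclideanSpace ℝ (Fin n)) (hxstar : xstar ∈ P)
    (hmin : IsMinOn (fun x => f x + g x) P xstar)
    (x s : ℕ → EuclideanSpace ℝ (Fin n)) (α : ℕ → ℝ) (hx0 : x 0 ∈ P)
    (hsP : ∀ k, s k ∈ P)
    (hsmin : ∀ k, IsMinOn (fun u => ⟪gradient f (x k), u⟫ + g u) P (s k))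
    (hαmem : ∀ k, α k ∈ Set.Icc (0 : ℝ) 1)
    (hαmin : ∀ k, IsMinOn (fun a : ℝ => f (x k + a • (s k - x k)) + g (x k + a • (s k - x k)))
      (Set.Icc (0 : ℝ) 1) (α k))
    (hstep : ∀ k : ℕ, x (k + 1) = x k + α k • (s k - x k)) :
    ∀ k : ℕ, 1 ≤ k →
      (f (x k) + g (x k)) - (f xstar + g xstar) ≤ 2 * CF / ((k : ℝ) + 2) :=
  stmt_13_general n P hPconv f g hfconv hgconv hfdiff hgdiff CF hCF hcurv xstar hxstar x s α hx0 hsP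
    hsmin hαmem hαmin hstep
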